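/- arXiv:2406.08944 — 2 statements merged into one kernel-verified Lean document; each statement's English description precedes it below -/
import Mathlib

section
/- The map F sending a two-colored oriented multigraph configuration ω (with red current r and blue current b on a fixed multigraph G_N) to the pair (ω_R, ω_B), where ω_R is obtained by painting all edges red (keeping orientations) and ω_B is obtained by reversing the orientations of red edges and painting all edges blue, is a bijection from {∂r = f, ∂b = g, |r+b| = N} onto {∂r' = f+g, |r'| = N} × {∂b' = −f+g, |b'| = N}. -/
open Finset

/-- A finite multigraph on vertex set `V`: a finite set of distinguishable
strands (edges), each with an unordered pair of distinct endpoints. -/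
structure MG (V : Type) where
  Strand : Type
  [fin : Fintype Strand]
  [dec : DecidableEq Strand]
  ends : Strand → Sym2 V
  noloop : ∀ s, ¬ (ends s).IsDiag

attribute [instance] MG.fin MG.dec

variable {V : Type} [Fintype V] [DecidableEq V]

/-- An oriented (one-colored) configuration on the multigraph `G`. -/
structure Config (G : MG V) where
  orient : G.Strand → V × V
  compat : ∀ s, Sym2.mk (orient s).1 (orient s).2 = G.ends s

/-- A two-colored oriented configuration on the multigraph `G`
(`red s = true` means the strand `s` is red, otherwise it is blue). -/
structure Config2 (G : MG V) where
  orient : G.Strand → V × V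
  red : G.Strand → Bool
  compat : ∀ s, Sym2.mk (orient s).1 (orient s).2 = G.ends s

/-- The current induced by an oriented configuration. -/
def Config.cur {G : MG V} (ω : Config G) (x y : V) : ℕ :=
  (univ.filter fun s => ω.orient s = (x, y)).card

/-- The red current of a two-colored configuration. -/
def Config2.redCur {G : MG V} (ω : Config2 G) (x y : V) : ℕ :=
  (univ.filter fun s => ω.orient s = (x, y) ∧ ω.red s = true).card

/-- The blue current of a two-colored configuration. -/
def Config2.blueCur {G : MG V} (ω : Config2 G) (x y : V) : ℕ :=
  (univ.filter fun s => ω.orient s = (x, y) ∧ ω.red s = false).card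

/-- The source function of a current. -/
def csrc (n : V → V → ℕ) (x : V) : ℤ :=
  ∑ y, ((n x y : ℤ) - n y x)

/-- The bijection `F`: paint everything red keeping orientations for the first
component; reverse red strands and paint everything blue for the second. -/
def F {G : MG V} (ω : Config2 G) : Config G × Config G :=
  (⟨ω.orient, ω.compat⟩,
   ⟨fun s => if ω.red s then (ω.orient s).swap else ω.orient s, by
      intro s
      by_cases h : ω.red s <;> simp [h, ← ω.compat s, Sym2.eq_swap]⟩)

/- A strand is red in `ω` exactly when its orientations in the two components of `F ω` differ:
they are each other's swap, and a swap of a pair of distinct endpoints moves it. This makes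
`F` a bijection of all configurations. The currents of `F ω` are `r + b` and `rᵀ + b`, so their
sources are `∂r + ∂b` and `-∂r + ∂b`, a linear system from which `∂r` and `∂b` are recovered. -/

omit [DecidableEq V] in
lemma csrc_add (n m : V → V → ℕ) (x : V) : csrc (n + m) x = csrc n x + csrc m x := by
  simp only [csrc, Pi.add_apply, Nat.cast_add, ← sum_add_distrib]
  exact sum_congr rfl fun _ _ => by ring

omit [DecidableEq V] in
lemma csrc_flip (n : V → V → ℕ) (x : V) : csrc (flip n) x = -csrc n x := by
  simp only [csrc, flip, ← sum_neg_distrib]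
  exact sum_congr rfl fun _ _ => by ring

variable {G : MG V}

omit [Fintype V] [DecidableEq V] in
lemma Config.orient_injective : Function.Injective (Config.orient (G := G)) := by
  rintro ⟨o, _⟩ ⟨o', _⟩ rfl
  rfl

omit [Fintype V] [DecidableEq V] in
lemma Config.orient_swap_ne (ω : Config G) (s : G.Strand) :
    (ω.orient s).swap ≠ ω.orient s := by
  intro h
  apply G.noloop s
  rw [← ω.compat s, Sym2.mk_isDiag_iff]
  exact congrArg Prod.snd h

omit [Fintype V] [DecidableEq V] in
lemma Config.orient_eq_or_eq_swap (ω ω' : Config G) (s : G.Strand) :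
    ω'.orient s = ω.orient s ∨ ω'.orient s = (ω.orient s).swap :=
  Sym2.mk_eq_mk_iff.mp (by rw [ω.compat, ω'.compat])

def Finv (p : Config G × Config G) : Config2 G :=
  ⟨p.1.orient, fun s => decide (p.2.orient s ≠ p.1.orient s), p.1.compat⟩

omit [Fintype V] in
lemma F_Finv (p : Config G × Config G) : F (Finv p) = p := by
  refine Prod.ext rfl (Config.orient_injective (funext fun s => ?_))
  change (if decide (p.2.orient s ≠ p.1.orient s) then (p.1.orient s).swap
    else p.1.orient s) = p.2.orient s
  rcases p.1.orient_eq_or_eq_swap p.2 s with h | h <;> simp [h, Config.orient_swap_ne]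

omit [Fintype V] in
lemma Finv_F (ω : Config2 G) : Finv (F ω) = ω := by
  obtain ⟨o, r, c⟩ := ω
  have swap_ne : ∀ s, (o s).swap ≠ o s := (F ⟨o, r, c⟩).1.orient_swap_ne
  refine congrArg (Config2.mk o · c) (funext fun s => ?_)
  change decide ((if r s then (o s).swap else o s) ≠ o s) = r s
  cases r s <;> simp [swap_ne]

omit [Fintype V] in
lemma F_injective : Function.Injective (F (G := G)) :=
  Function.LeftInverse.injective Finv_F

omit [Fintype V] in
lemma cur_F_fst (ω : Config2 G) : (F ω).1.cur = ω.redCur + ω.blueCur := by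
  funext x y
  rw [Pi.add_apply, Pi.add_apply, Config2.redCur, Config2.blueCur, ← card_union_of_disjoint,
    ← filter_or]
  · refine congrArg card (filter_congr fun s _ => ?_)
    change ω.orient s = (x, y) ↔ _
    cases ω.red s <;> simp
  · exact disjoint_filter.mpr fun s _ h h' => by simp [h.2] at h'

omit [Fintype V] in
lemma cur_F_snd (ω : Config2 G) : (F ω).2.cur = flip ω.redCur + ω.blueCur := by
  funext x y
  rw [Pi.add_apply, Pi.add_apply, flip, Config2.redCur, Config2.blueCur, ← card_union_of_disjoint,
    ← filter_or]
  · refine congrArg card (filter_congr fun s _ => ?_)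
    change (if ω.red s then (ω.orient s).swap else ω.orient s) = (x, y) ↔ _
    cases ω.red s <;> simp [Prod.swap_eq_iff_eq_swap]
  · exact disjoint_filter.mpr fun s _ h h' => by simp [h.2] at h'

lemma csrc_F_fst (ω : Config2 G) (x : V) :
    csrc (F ω).1.cur x = csrc ω.redCur x + csrc ω.blueCur x := by
  rw [cur_F_fst, csrc_add]

lemma csrc_F_snd (ω : Config2 G) (x : V) :
    csrc (F ω).2.cur x = -csrc ω.redCur x + csrc ω.blueCur x := by
  rw [cur_F_snd, csrc_add, csrc_flip]

theorem F_bijOn_general (G : MG V) (f g : V → ℤ) :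
    Set.BijOn (F (G := G))
      {ω : Config2 G | (∀ x, csrc ω.redCur x = f x) ∧ (∀ x, csrc ω.blueCur x = g x)}
      {p : Config G × Config G |
        (∀ x, csrc p.1.cur x = f x + g x) ∧ (∀ x, csrc p.2.cur x = -f x + g x)} := by
  refine ⟨?_, F_injective.injOn, ?_⟩
  · rintro ω ⟨hr, hb⟩
    exact ⟨fun x => by rw [csrc_F_fst, hr, hb], fun x => by rw [csrc_F_snd, hr, hb]⟩
  · rintro p ⟨h₁, h₂⟩
    refine ⟨Finv p, ⟨fun x => ?_, fun x => ?_⟩, F_Finv p⟩ <;>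
    · have hfst := csrc_F_fst (Finv p) x
      have hsnd := csrc_F_snd (Finv p) x
      rw [F_Finv] at hfst hsnd
      linarith [h₁ x, h₂ x]

/-- The map `F`, sending a two-colored oriented configuration `ω` on `G_N` to
`(ω_R, ω_B)` (paint all red keeping orientations; reverse red strands and paint
all blue), is a bijection from `{∂r = f, ∂b = g}_N` onto
`{∂r' = f+g}_N × {∂b' = −f+g}_N`. -/
theorem F_bijOn (G : MG V) (f g : V → ℤ)
    (hf : ∑ v, f v = 0) (hg : ∑ v, g v = 0) :
    Set.BijOn (F (G := G))
      {ω : Config2 G | (∀ x, csrc ω.redCur x = f x) ∧ (∀ x, csrc ω.blueCur x = g x)}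
      {p : Config G × Config G |
        (∀ x, csrc p.1.cur x = f x + g x) ∧ (∀ x, csrc p.2.cur x = -f x + g x)} :=
  F_bijOn_general G f g
end

section
/- The partition function of the XY model on a finite graph satisfies Z = Σ_{n : ∂n = 0} w_J(n), where the sum runs over all currents n on oriented edges with zero source function and w_J(n) = Π_{oriented edges xy} (J_xy/2)^{n_{xy}} / n_{xy}!. -/
open Finset MeasureTheory Real

variable {V : Type} [Fintype V] [DecidableEq V]

/-- The box `[0, 2π)^V` of angle configurations. -/
def box (V : Type) [Fintype V] : Set (V → ℝ) :=
  Set.univ.pi fun _ => Set.Ico 0 (2 * Real.pi)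

/-- Minus the Hamiltonian of the XY model, in angle variables:
`−H(θ) = Σ_{xy∈E} J_xy cos(θ_x − θ_y)`, written as a sum over ordered pairs
(with `J` symmetric and `J x y = 0` if `xy` is not an edge). -/
noncomputable def energy (J : V → V → ℝ) (θ : V → ℝ) : ℝ :=
  (∑ x, ∑ y, J x y * Real.cos (θ x - θ y)) / 2

/-- The partition function of the XY model:
`Z = ∫_{(S¹)^V} e^{−H} dσ` with `dσ` the uniform probability measure. -/
noncomputable def Z (J : V → V → ℝ) : ℝ :=
  (∫ θ in box V, Real.exp (energy J θ)) / (2 * Real.pi) ^ (Fintype.card V)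

/-- The unnormalized correlation `Z·⟨σ^φ⟩ = ∫ Π_x σ_x^{φ_x} e^{−H} dσ`,
where `σ_x = e^{iθ_x}`. -/
noncomputable def U (J : V → V → ℝ) (φ : V → ℤ) : ℂ :=
  (∫ θ in box V,
      Complex.exp (Complex.I * ∑ x, (φ x : ℂ) * (θ x : ℂ)) * Real.exp (energy J θ)) /
    ((2 * Real.pi : ℂ)) ^ (Fintype.card V)

/-- The correlation function `⟨σ^φ⟩ = Z·⟨σ^φ⟩ / Z`. -/
noncomputable def corr (J : V → V → ℝ) (φ : V → ℤ) : ℂ :=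
  U J φ / (Z J : ℂ)

/-- The weight `w_J(n) = Π_{oriented edges} (J_xy/2)^{n_xy} / n_xy!` of a
current `n` (oriented edges are ordered pairs; pairs with `J x y = 0` or
`x = y` carry no weight unless `n` vanishes there). -/
noncomputable def wgt (J : V → V → ℝ) (n : V → V → ℕ) : ℝ :=
  ∏ x, ∏ y, (J x y / 2) ^ (n x y) / (n x y).factorial

/-!
Write `exp (−H)` as `∏_{(x,y)} exp ((J_xy / 2) σ_x σ̄_y)`, which uses the symmetry of `J`, and
expand every factor in its exponential series. The product of these absolutely convergent series
is a sum over currents `n` of `w_J(n) ∏_x σ_x ^ ∂n_x`, and the sum of absolute values is finite, so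
it may be integrated term by term over the torus. The integral of `∏_x σ_x ^ ∂n_x` is `1` if
`∂n = 0` and `0` otherwise.
-/

universe u

theorem summable_norm_and_tsum_pi_prod_eq_prod_tsum {ι : Type u} {β R : Type*} [Fintype ι]
    [NormedCommRing R] [CompleteSpace R] (f : ι → β → R) (hf : ∀ i, Summable fun k => ‖f i k‖) :
    (Summable fun g : ι → β => ‖∏ i, f i (g i)‖) ∧
      ∑' g : ι → β, ∏ i, f i (g i) = ∏ i, ∑' k, f i k := by
  -- The induction below does not transport `Fintype` instances, so they are quantified over.
  suffices ∀ (κ : Type u) [Finite κ] [Fintype κ] (f : κ → β → R),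
      (∀ i, Summable fun k => ‖f i k‖) → (Summable fun g : κ → β => ‖∏ i, f i (g i)‖) ∧
        ∑' g : κ → β, ∏ i, f i (g i) = ∏ i, ∑' k, f i k from this ι f hf
  intro κ _
  induction κ using Finite.induction_empty_option with
  | @of_equiv α κ e ih =>
    intro _ f hf
    have := Fintype.ofEquiv _ e.symm
    obtain ⟨hs, hsum⟩ := ih (fun a => f (e a)) fun a => hf (e a)
    have hprod (h : α → β) : ∏ a, f (e a) (h a) = ∏ i, f i (e.arrowCongr (.refl β) h i) :=
      Fintype.prod_equiv e _ _ fun a => by simp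
    refine ⟨(e.arrowCongr (.refl β)).summable_iff.mp ?_, ?_⟩
    · simpa only [Function.comp_def, ← hprod] using hs
    · rw [← (e.arrowCongr (.refl β)).tsum_eq]
      simp only [← hprod, hsum]
      exact Fintype.prod_equiv e _ _ fun _ => rfl
  | h_empty =>
    intro _ f hf
    simp [Summable.of_finite]
  | @h_option α _ ih =>
    intro _ f hf
    obtain rfl : ‹Fintype (Option α)› = instFintypeOption := Subsingleton.elim _ _
    obtain ⟨hs, hsum⟩ := ih (fun a => f (some a)) fun a => hf (some a)
    let E : β × (α → β) ≃ (Option α → β) :=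
      (Equiv.piOptionEquivProd (β := fun _ => β)).symm
    have hprod (p : β × (α → β)) : ∏ i, f i (E p i) = f none p.1 * ∏ a, f (some a) (p.2 a) :=
      Fintype.prod_option _
    refine ⟨E.summable_iff.mp ?_, ?_⟩
    · simpa only [Function.comp_def, hprod] using (hf none).mul_norm hs
    · rw [← E.tsum_eq, Fintype.prod_option, ← hsum,
        tsum_mul_tsum_of_summable_norm (hf none) hs]
      simp only [hprod]

theorem summable_norm_pi_prod_pow_div_factorial {ι : Type u} {𝔸 : Type*} [Fintype ι]
    [NormedField 𝔸] [NormedAlgebra ℚ 𝔸] [CompleteSpace 𝔸] (a : ι → 𝔸) :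
    Summable fun g : ι → ℕ => ‖∏ i, a i ^ g i / (g i).factorial‖ :=
  (summable_norm_and_tsum_pi_prod_eq_prod_tsum _
    fun i => NormedSpace.norm_expSeries_div_summable (a i)).1

theorem exp_sum_eq_tsum_pi_prod_pow_div_factorial {ι : Type u} {𝔸 : Type*} [Fintype ι]
    [NormedField 𝔸] [NormedAlgebra ℚ 𝔸] [CompleteSpace 𝔸] (a : ι → 𝔸) :
    NormedSpace.exp (∑ i, a i) = ∑' g : ι → ℕ, ∏ i, a i ^ g i / (g i).factorial := by
  rw [NormedSpace.exp_sum, (summable_norm_and_tsum_pi_prod_eq_prod_tsum _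
    fun i => NormedSpace.norm_expSeries_div_summable (a i)).2]
  exact Finset.prod_congr rfl fun i _ => (NormedSpace.expSeries_div_hasSum_exp (a i)).tsum_eq.symm

theorem integral_Ico_exp_I_mul_int_mul (k : ℤ) :
    ∫ t in Set.Ico 0 (2 * π), Complex.exp (Complex.I * (k * t)) =
      if k = 0 then (2 * π : ℂ) else 0 := by
  rw [integral_Ico_eq_integral_Ioo, ← integral_Ioc_eq_integral_Ioo,
    ← intervalIntegral.integral_of_le two_pi_pos.le]
  split_ifs with hk
  · simp [hk]
  · have hk' : Complex.I * k ≠ 0 := by simp [hk]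
    simp_rw [← mul_assoc]
    rw [integral_exp_mul_complex hk',
      show Complex.I * k * (2 * π : ℝ) = k * (2 * π * Complex.I) by push_cast; ring,
      Complex.exp_int_mul_two_pi_mul_I]
    simp

omit [DecidableEq V] in
theorem setIntegral_box_exp_I_mul_sum (c : V → ℤ) :
    ∫ θ in box V, Complex.exp (Complex.I * ∑ x, (c x : ℂ) * θ x) =
      if ∀ x, c x = 0 then (2 * π : ℂ) ^ Fintype.card V else 0 := by
  simp_rw [Finset.mul_sum, Complex.exp_sum]
  rw [box.eq_1, volume_pi, Measure.restrict_pi_pi,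
    integral_fintype_prod_eq_prod fun x (t : ℝ) => Complex.exp (Complex.I * (c x * t))]
  simp_rw [integral_Ico_exp_I_mul_int_mul, Fintype.prod_ite_zero, Finset.prod_const,
    Finset.card_univ]

omit [DecidableEq V] in
instance isFiniteMeasure_restrict_box : IsFiniteMeasure (volume.restrict (box V)) := by
  rw [box.eq_1, volume_pi, Measure.restrict_pi_pi]
  infer_instance

omit [DecidableEq V] in
theorem ofReal_energy_eq_sum_mul_exp (J : V → V → ℝ) (hsym : ∀ x y, J x y = J y x) (θ : V → ℝ) :
    (energy J θ : ℂ) = ∑ x, ∑ y, (J x y : ℂ) / 2 * Complex.exp (Complex.I * (θ x - θ y)) := by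
  set S := ∑ x, ∑ y, (J x y : ℂ) / 2 * Complex.exp (Complex.I * (θ x - θ y))
  have hswap : ∑ x, ∑ y, (J x y : ℂ) / 2 * Complex.exp (Complex.I * (θ y - θ x)) = S := by
    rw [Finset.sum_comm]
    simp only [S, hsym]
  have hcos : (energy J θ : ℂ) =
      (S + ∑ x, ∑ y, (J x y : ℂ) / 2 * Complex.exp (Complex.I * (θ y - θ x))) / 2 := by
    simp only [S, energy, Complex.ofReal_div, Complex.ofReal_sum, Complex.ofReal_mul,
      Complex.ofReal_cos, Complex.ofReal_sub, Complex.cos, ← Finset.sum_add_distrib]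
    congr! 3 with x - y -
    ring_nf
  rw [hcos, hswap, add_self_div_two]

omit [DecidableEq V] in
theorem sum_sum_mul_sub_eq_sum_csrc_mul {R : Type*} [CommRing R] (n : V → V → ℕ) (θ : V → R) :
    ∑ x, ∑ y, (n x y : R) * (θ x - θ y) = ∑ x, (csrc n x : R) * θ x := by
  simp only [csrc, Int.cast_sum, Int.cast_sub, Int.cast_natCast, Finset.sum_mul, sub_mul,
    mul_sub, Finset.sum_sub_distrib]
  rw [Finset.sum_comm (f := fun x y => (n x y : R) * θ y)]

omit [DecidableEq V] in
theorem prod_prod_pow_div_factorial_eq_wgt_mul (J : V → V → ℝ) (θ : V → ℝ) (n : V → V → ℕ) :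
    ∏ x, ∏ y, ((J x y : ℂ) / 2 * Complex.exp (Complex.I * (θ x - θ y))) ^ n x y /
        (n x y).factorial =
      wgt J n * Complex.exp (Complex.I * ∑ x, (csrc n x : ℂ) * θ x) := by
  have hfactor (x y : V) :
      ((J x y : ℂ) / 2 * Complex.exp (Complex.I * (θ x - θ y))) ^ n x y / (n x y).factorial =
        ((J x y / 2) ^ n x y / (n x y).factorial : ℝ) *
          Complex.exp (Complex.I * (n x y * (θ x - θ y))) := by
    rw [mul_pow, ← Complex.exp_nat_mul]
    push_cast
    ring_nf
  simp only [hfactor, Finset.prod_mul_distrib, ← Complex.exp_sum, ← Finset.mul_sum,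
    sum_sum_mul_sub_eq_sum_csrc_mul, wgt, Complex.ofReal_prod]

omit [DecidableEq V] in
theorem summable_norm_wgt (J : V → V → ℝ) : Summable fun n => ‖wgt J n‖ := by
  refine (Equiv.curry V V ℕ).summable_iff.mp ?_
  simpa [Function.comp_def, wgt, Fintype.prod_prod_type] using
    summable_norm_pi_prod_pow_div_factorial fun p : V × V => J p.1 p.2 / 2

omit [DecidableEq V] in
theorem ofReal_exp_energy_eq_tsum (J : V → V → ℝ) (hsym : ∀ x y, J x y = J y x) (θ : V → ℝ) :
    (Real.exp (energy J θ) : ℂ) =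
      ∑' n : V → V → ℕ, wgt J n * Complex.exp (Complex.I * ∑ x, (csrc n x : ℂ) * θ x) := by
  have hexp := exp_sum_eq_tsum_pi_prod_pow_div_factorial fun p : V × V =>
    (J p.1 p.2 : ℂ) / 2 * Complex.exp (Complex.I * (θ p.1 - θ p.2))
  rw [← Complex.exp_eq_exp_ℂ, Fintype.sum_prod_type] at hexp
  rw [Complex.ofReal_exp, ofReal_energy_eq_sum_mul_exp J hsym, hexp, ← (Equiv.curry V V ℕ).tsum_eq]
  exact tsum_congr fun g => by
    rw [← prod_prod_pow_div_factorial_eq_wgt_mul, Fintype.prod_prod_type]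
    rfl

omit [DecidableEq V] in
theorem setIntegral_box_exp_energy (J : V → V → ℝ) (hsym : ∀ x y, J x y = J y x) :
    ∫ θ in box V, Real.exp (energy J θ) =
      (2 * π) ^ Fintype.card V * ∑' n : {n : V → V → ℕ // ∀ x, csrc n x = 0}, wgt J n.1 := by
  set G : (V → V → ℕ) → (V → ℝ) → ℂ := fun n θ =>
    wgt J n * Complex.exp (Complex.I * ∑ x, (csrc n x : ℂ) * θ x)
  have hnorm (n : V → V → ℕ) (θ : V → ℝ) : ‖G n θ‖ = ‖wgt J n‖ := by
    have hreal : ∑ x, (csrc n x : ℂ) * θ x = ((∑ x, (csrc n x : ℝ) * θ x : ℝ) : ℂ) := by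
      push_cast
      rfl
    rw [norm_mul, hreal, Complex.norm_exp_I_mul_ofReal, mul_one, Complex.norm_real]
  have hint (n : V → V → ℕ) : Integrable (G n) (volume.restrict (box V)) :=
    Integrable.of_bound (by fun_prop) ‖wgt J n‖ (.of_forall fun θ => (hnorm n θ).le)
  have hsum : Summable fun n => ∫ θ in box V, ‖G n θ‖ := by
    simpa only [hnorm, setIntegral_const, smul_eq_mul] using
      (summable_norm_wgt J).mul_left (volume.real (box V))
  apply Complex.ofReal_injective
  calc ((∫ θ in box V, Real.exp (energy J θ) : ℝ) : ℂ)
      = ∫ θ in box V, ∑' n, G n θ := by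
        rw [← integral_complex_ofReal]
        simp only [ofReal_exp_energy_eq_tsum J hsym, G]
    _ = ∑' n, ∫ θ in box V, G n θ := (integral_tsum_of_summable_integral_norm hint hsum).symm
    _ = ∑' n, (((2 * π) ^ Fintype.card V *
          {n : V → V → ℕ | ∀ x, csrc n x = 0}.indicator (wgt J) n : ℝ) : ℂ) := by
        refine tsum_congr fun n => ?_
        rw [integral_const_mul, setIntegral_box_exp_I_mul_sum]
        by_cases h : ∀ x, csrc n x = 0 <;> simp [h, mul_comm]
    _ = _ := by
        rw [← Complex.ofReal_tsum, tsum_mul_left, ← _root_.tsum_subtype]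
        rfl

theorem Z_eq_sum_sourceless_general (J : V → V → ℝ)
    (hsym : ∀ x y, J x y = J y x) :
    Z J = ∑' n : {n : V → V → ℕ // ∀ x, csrc n x = 0}, wgt J n.1 := by
  rw [Z, setIntegral_box_exp_energy J hsym, mul_div_cancel_left₀ _ (by positivity)]

/-- Random current representation of the partition function:
`Z = Σ_{n : ∂n = 0} w_J(n)`. -/
theorem Z_eq_sum_sourceless (J : V → V → ℝ)
    (hsym : ∀ x y, J x y = J y x) (hpos : ∀ x y, 0 ≤ J x y)
    (hdiag : ∀ x, J x x = 0) :
    Z J = ∑' n : {n : V → V → ℕ // ∀ x, csrc n x = 0}, wgt J n.1 :=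
  Z_eq_sum_sourceless_general J hsym
end
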